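/- If m ≥ 1 and n ≥ 2 are integers with n ≡ 0 (mod 3), then the bondage number of K_m ⊠ P_n satisfies b(K_m ⊠ P_n) ≥ ⌈m/2⌉; equivalently, for every edge set Z ⊆ E(K_m ⊠ P_n) with |Z| < ⌈m/2⌉, one has γ(K_m ⊠ P_n − Z) = γ(K_m ⊠ P_n). -/

import Mathlib

open SimpleGraph Finset

/-- `D` is a dominating set of `G`: every vertex is in `D` or adjacent to a vertex of `D`. -/
def SimpleGraph.IsDominatingSet {V : Type*} (G : SimpleGraph V) (D : Set V) : Prop :=
  ∀ v : V, v ∈ D ∨ ∃ u ∈ D, G.Adj u v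

/-- The domination number of a finite graph. -/
noncomputable def SimpleGraph.dominationNumber {V : Type*} [Fintype V]
    (G : SimpleGraph V) : ℕ :=
  sInf {k | ∃ D : Finset V, D.card = k ∧ G.IsDominatingSet ↑D}

/-- The bondage number of a finite graph: the least size of a set of edges whose removal
increases the domination number. -/
noncomputable def SimpleGraph.bondageNumber {V : Type*} [Fintype V]
    (G : SimpleGraph V) : ℕ :=
  sInf {k | ∃ Z : Finset (Sym2 V), Z.card = k ∧ (↑Z : Set (Sym2 V)) ⊆ G.edgeSet ∧
    G.dominationNumber < (G.deleteEdges ↑Z).dominationNumber}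

/-- The strong product of two simple graphs. -/
def SimpleGraph.strongProd {V W : Type*} (G : SimpleGraph V) (H : SimpleGraph W) :
    SimpleGraph (V × W) :=
  SimpleGraph.fromRel (fun a b =>
    (a.1 = b.1 ∧ H.Adj a.2 b.2) ∨ (G.Adj a.1 b.1 ∧ a.2 = b.2) ∨
      (G.Adj a.1 b.1 ∧ H.Adj a.2 b.2))

infixl:70 " ⊠ " => SimpleGraph.strongProd

/-!
Split the columns of `K_m ⊠ P_n` into `n / 3` blocks of three consecutive columns. The middle
column of a block is only adjacent to vertices of that block, so every dominating set meets every
block and `γ ≥ n / 3`. Conversely, fewer than `⌈m/2⌉` edges touch fewer than `m` vertices, so each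
middle column keeps a vertex incident to no deleted edge; such a vertex still dominates its whole
block, and these `n / 3` vertices dominate `K_m ⊠ P_n − Z`. As deleting edges cannot decrease `γ`,
this gives `γ(K_m ⊠ P_n − Z) = γ(K_m ⊠ P_n) = n / 3`.
-/

namespace SimpleGraph

variable {V : Type*} {G H : SimpleGraph V}

theorem IsDominatingSet.mono {D : Set V} (hGH : G ≤ H) (hD : G.IsDominatingSet D) :
    H.IsDominatingSet D := fun v =>
  (hD v).imp_right fun ⟨u, hu, huv⟩ => ⟨u, hu, hGH huv⟩

variable [Fintype V]

theorem dominationNumber_le_card {D : Finset V} (hD : G.IsDominatingSet ↑D) :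
    G.dominationNumber ≤ D.card :=
  Nat.sInf_le ⟨D, rfl, hD⟩

theorem le_dominationNumber {c : ℕ} (h : ∀ D : Finset V, G.IsDominatingSet ↑D → c ≤ D.card) :
    c ≤ G.dominationNumber :=
  le_csInf ⟨_, Finset.univ, rfl, fun v => Or.inl (Finset.mem_coe.2 (Finset.mem_univ v))⟩
    (by rintro k ⟨D, rfl, hD⟩; exact h D hD)

theorem dominationNumber_anti (hGH : G ≤ H) : H.dominationNumber ≤ G.dominationNumber :=
  le_dominationNumber fun _ hD => dominationNumber_le_card (hD.mono hGH)

theorem dominationNumber_bot : (⊥ : SimpleGraph V).dominationNumber = Fintype.card V := by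
  refine le_antisymm ?_ (le_dominationNumber fun D hD => ?_)
  · exact dominationNumber_le_card fun v => Or.inl (Finset.mem_coe.2 (Finset.mem_univ v))
  · have hD_univ : Finset.univ ⊆ D := fun v _ => by simpa using hD v
    exact Finset.card_le_card hD_univ

/-- `hG` keeps the set defining `b(G)` nonempty (delete every edge), so that `sInf` is not the
junk value of `∅`. -/
theorem le_bondageNumber {c : ℕ} (hG : G.dominationNumber < Fintype.card V)
    (h : ∀ Z : Finset (Sym2 V), ↑Z ⊆ G.edgeSet → Z.card < c →
      (G.deleteEdges ↑Z).dominationNumber ≤ G.dominationNumber) :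
    c ≤ G.bondageNumber := by
  classical
  refine le_csInf ⟨_, G.edgeSet.toFinset, rfl, by simp, ?_⟩ fun k ⟨Z, hZk, hZG, hlt⟩ => ?_
  · simpa [dominationNumber_bot] using hG
  · by_contra! hk
    exact (h Z hZG (hZk ▸ hk)).not_gt hlt

end SimpleGraph

theorem Sym2.exists_forall_notMem_of_two_mul_card_lt {ι V : Type*} [Fintype ι] {f : ι → V}
    (hf : Function.Injective f) (Z : Finset (Sym2 V)) (hZ : 2 * Z.card < Fintype.card ι) :
    ∃ i, ∀ e ∈ Z, f i ∉ e := by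
  classical
  by_contra! hcover
  have hsub : Finset.univ.map ⟨f, hf⟩ ⊆ Z.biUnion Sym2.toFinset := by
    intro v hv
    obtain ⟨i, -, rfl⟩ := Finset.mem_map.1 hv
    obtain ⟨e, he, hie⟩ := hcover i
    exact Finset.mem_biUnion.2 ⟨e, he, Sym2.mem_toFinset.2 hie⟩
  have hcard : (Z.biUnion Sym2.toFinset).card ≤ Z.card * 2 :=
    Finset.card_biUnion_le_card_mul _ _ _ fun e _ => by
      rw [Sym2.card_toFinset]; split_ifs <;> omega
  have := Finset.card_le_card hsub
  simp only [Finset.card_map, Finset.card_univ] at this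
  omega

theorem strongProd_top_pathGraph_adj {m n : ℕ} (a b : Fin m × Fin n) :
    ((⊤ : SimpleGraph (Fin m)) ⊠ pathGraph n).Adj a b ↔
      a ≠ b ∧ (a.2 : ℕ) ≤ b.2 + 1 ∧ (b.2 : ℕ) ≤ a.2 + 1 := by
  obtain ⟨a1, a2⟩ := a
  obtain ⟨b1, b2⟩ := b
  simp only [SimpleGraph.strongProd, SimpleGraph.fromRel_adj, SimpleGraph.top_adj,
    pathGraph_adj, ne_eq, Prod.mk.injEq, not_and, Fin.ext_iff]
  omega

theorem div_three_le_card_of_isDominatingSet {m n : ℕ} (hm : 1 ≤ m)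
    {D : Finset (Fin m × Fin n)}
    (hD : ((⊤ : SimpleGraph (Fin m)) ⊠ pathGraph n).IsDominatingSet ↑D) :
    n / 3 ≤ D.card := by
  have hsurj : Set.SurjOn (fun u : Fin m × Fin n => (u.2 : ℕ) / 3) ↑D ↑(Finset.range (n / 3)) := by
    intro k hk
    simp only [Finset.coe_range, Set.mem_Iio] at hk
    rcases hD (⟨0, hm⟩, ⟨3 * k + 1, by omega⟩) with hmem | ⟨u, hu, hadj⟩
    · exact ⟨_, hmem, by simp only; omega⟩
    · rw [strongProd_top_pathGraph_adj] at hadj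
      exact ⟨u, hu, by simp only at hadj ⊢; omega⟩
  simpa using Finset.card_le_card_of_surjOn _ hsurj

theorem dominationNumber_strongProd_top_pathGraph_deleteEdges_le {m n : ℕ} (h3 : n % 3 = 0)
    (Z : Finset (Sym2 (Fin m × Fin n))) (hZ : 2 * Z.card < m) :
    (((⊤ : SimpleGraph (Fin m)) ⊠ pathGraph n).deleteEdges ↑Z).dominationNumber ≤ n / 3 := by
  classical
  let center (k : Fin (n / 3)) : Fin n := ⟨3 * k + 1, by omega⟩
  have hrow (k : Fin (n / 3)) : ∃ i : Fin m, ∀ e ∈ Z, (i, center k) ∉ e :=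
    Sym2.exists_forall_notMem_of_two_mul_card_lt (fun _ _ h => congrArg Prod.fst h) Z
      (by simpa using hZ)
  choose row hrow using hrow
  let D := Finset.univ.image fun k => (row k, center k)
  have hD : (((⊤ : SimpleGraph (Fin m)) ⊠ pathGraph n).deleteEdges ↑Z).IsDominatingSet ↑D := by
    intro v
    let k : Fin (n / 3) := ⟨v.2 / 3, by omega⟩
    have hk : (row k, center k) ∈ D := Finset.mem_image_of_mem _ (Finset.mem_univ k)
    by_cases hv : (row k, center k) = v
    · exact Or.inl (hv ▸ hk)
    · refine Or.inr ⟨_, hk, ?_⟩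
      rw [SimpleGraph.deleteEdges_adj, strongProd_top_pathGraph_adj]
      exact ⟨⟨hv, by simp only [center, k]; omega, by simp only [center, k]; omega⟩,
        fun he => hrow k _ he (Sym2.mem_mk_left _ _)⟩
  calc _ ≤ D.card := SimpleGraph.dominationNumber_le_card hD
    _ ≤ Finset.univ.card := Finset.card_image_le
    _ = n / 3 := by simp

theorem dominationNumber_strongProd_top_pathGraph {m n : ℕ} (hm : 1 ≤ m) (h3 : n % 3 = 0) :
    ((⊤ : SimpleGraph (Fin m)) ⊠ pathGraph n).dominationNumber = n / 3 := by
  refine le_antisymm ?_ (SimpleGraph.le_dominationNumber fun _ =>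
    div_three_le_card_of_isDominatingSet hm)
  simpa using dominationNumber_strongProd_top_pathGraph_deleteEdges_le h3 ∅ (by simpa)

/-- **Lemma.** If `m ≥ 1`, `n ≥ 2` and `n ≡ 0 (mod 3)`, then `b(K_m ⊠ P_n) ≥ ⌈m/2⌉`;
equivalently, removing any set of fewer than `⌈m/2⌉` edges does not change the
domination number. -/
theorem bondage_ge_of_mod_three_eq_zero (m n : ℕ) (hm : 1 ≤ m) (hn : 2 ≤ n)
    (h3 : n % 3 = 0) :
    (m + 1) / 2 ≤ ((⊤ : SimpleGraph (Fin m)) ⊠ pathGraph n).bondageNumber ∧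
    ∀ Z : Finset (Sym2 (Fin m × Fin n)),
      (↑Z : Set (Sym2 (Fin m × Fin n))) ⊆
          ((⊤ : SimpleGraph (Fin m)) ⊠ pathGraph n).edgeSet →
      Z.card < (m + 1) / 2 →
      (((⊤ : SimpleGraph (Fin m)) ⊠ pathGraph n).deleteEdges ↑Z).dominationNumber =
        ((⊤ : SimpleGraph (Fin m)) ⊠ pathGraph n).dominationNumber := by
  have hγ := dominationNumber_strongProd_top_pathGraph hm h3
  have hdel : ∀ Z : Finset (Sym2 (Fin m × Fin n)), Z.card < (m + 1) / 2 →
      (((⊤ : SimpleGraph (Fin m)) ⊠ pathGraph n).deleteEdges ↑Z).dominationNumber =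
        ((⊤ : SimpleGraph (Fin m)) ⊠ pathGraph n).dominationNumber := fun Z hZ =>
    le_antisymm (hγ ▸ dominationNumber_strongProd_top_pathGraph_deleteEdges_le h3 Z (by omega))
      (SimpleGraph.dominationNumber_anti (SimpleGraph.deleteEdges_le _))
  refine ⟨SimpleGraph.le_bondageNumber ?_ fun Z _ hZ => (hdel Z hZ).le, fun Z _ => hdel Z⟩
  rw [hγ, Fintype.card_prod, Fintype.card_fin, Fintype.card_fin]
  calc n / 3 < n := Nat.div_lt_self (by omega) (by norm_num)
    _ ≤ m * n := Nat.le_mul_of_pos_left n hm
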